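/- Let d ≥ 1 and let Φ̄^d_{AB} := (1/d) Σ_{m=0}^{d−1} |m⟩⟨m|_A ⊗ |m⟩⟨m|_B be the maximally classically correlated state on C^d ⊗ C^d. For all positive semi-definite operators σ_A, σ_B with Tr[σ_A] ≤ 1 and Tr[σ_B] ≤ 1, the fidelity satisfies F(Φ̄^d_{AB}, σ_A ⊗ σ_B) ≤ 1/d. -/

import Mathlib

/-!
Write `√Φ̄ = D` with `D` diagonal, `D_{(m,m)} = d^{-1/2}` and zero elsewhere, and `Y = √(σ_A ⊗ σ_B)`.
By polar decomposition the trace norm of `D Y` is `Re Tr (Vᴴ D Y)` for a contraction `V`, and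
Cauchy–Schwarz row by row bounds this by `∑ₖ |D_k| ‖row_k Y‖ = d^{-1/2} ∑ₘ √(σ_A(m,m) σ_B(m,m))`.
A second Cauchy–Schwarz bounds the last sum by `√(Tr σ_A) √(Tr σ_B) ≤ 1`.
-/

open Matrix Kronecker ComplexOrder

/-- The square root of a positive semidefinite matrix (Mathlib's former `Matrix.PosSemidef.sqrt`). -/
noncomputable def Matrix.PosSemidef.sqrt {n : Type*} [Fintype n] [DecidableEq n] {A : Matrix n n ℂ}
    (hA : A.PosSemidef) : Matrix n n ℂ :=
  (hA.1.eigenvectorUnitary : Matrix n n ℂ) *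
    diagonal (fun i => ((Real.sqrt (hA.1.eigenvalues i) : ℝ) : ℂ)) *
    (star hA.1.eigenvectorUnitary : Matrix n n ℂ)

/-- The trace norm ‖A‖₁ = Tr √(AᴴA). -/
noncomputable def traceNorm {n : Type*} [Fintype n] [DecidableEq n] (A : Matrix n n ℂ) : ℝ :=
  ((Matrix.posSemidef_conjTranspose_mul_self A).sqrt).trace.re

/-- The positive-semidefinite square root of a matrix (0 if not PSD). -/
noncomputable def msqrt {n : Type*} [Fintype n] [DecidableEq n] (A : Matrix n n ℂ) :
    Matrix n n ℂ :=
  open scoped Classical in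
  if h : A.PosSemidef then h.sqrt else 0

/-- Uhlmann fidelity F(A,B) = ‖√A √B‖₁² of positive semi-definite operators. -/
noncomputable def fid {n : Type*} [Fintype n] [DecidableEq n] (A B : Matrix n n ℂ) : ℝ :=
  (traceNorm (msqrt A * msqrt B)) ^ 2

/-- The maximally classically correlated state Φ̄^d = (1/d) ∑ₘ |m⟩⟨m| ⊗ |m⟩⟨m|. -/
noncomputable def maxClassCorr (d : ℕ) : Matrix (Fin d × Fin d) (Fin d × Fin d) ℂ :=
  ((d : ℂ))⁻¹ • ∑ m : Fin d,
    (Matrix.single m m 1) ⊗ₖ (Matrix.single m m 1)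


open scoped MatrixOrder

namespace Matrix

lemma norm_mul_conjTranspose_apply_le {m n : Type*} [Fintype n] (X Y : Matrix m n ℂ) (i j : m) :
    ‖(X * Yᴴ) i j‖ ≤ √((X * Xᴴ) i i).re * √((Y * Yᴴ) j j).re := by
  have hre (Z : Matrix m n ℂ) (k : m) : ((Z * Zᴴ) k k).re = ‖WithLp.toLp 2 (Z k)‖ ^ 2 := by
    simp only [mul_apply, conjTranspose_apply, RCLike.star_def, Complex.mul_conj', Complex.re_sum,
      EuclideanSpace.norm_sq_eq]
    norm_cast
  have hinner : (X * Yᴴ) i j = inner ℂ (WithLp.toLp 2 (Y j)) (WithLp.toLp 2 (X i)) := by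
    simp [mul_apply, PiLp.inner_apply]
  rw [hre, hre, Real.sqrt_sq (norm_nonneg _), Real.sqrt_sq (norm_nonneg _), hinner, mul_comm]
  exact norm_inner_le_norm _ _

lemma PosSemidef.sum_sqrt_re_diag_mul_le {n : Type*} [Fintype n] {A B : Matrix n n ℂ}
    (hA : A.PosSemidef) (hB : B.PosSemidef) :
    ∑ i, √((A i i).re * (B i i).re) ≤ √A.trace.re * √B.trace.re := by
  have hre {C : Matrix n n ℂ} (hC : C.PosSemidef) (i : n) : 0 ≤ (C i i).re :=
    (Complex.nonneg_iff.1 hC.diag_nonneg).1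
  simp only [trace, diag, Complex.re_sum]
  simp_rw [Real.sqrt_mul (hre hA _)]
  exact Real.sum_sqrt_mul_sqrt_le _ (hre hA) (hre hB)

variable {n : Type*} [Fintype n] [DecidableEq n]

lemma cfc_mul_cfc (A : Matrix n n ℂ) (f g : ℝ → ℝ) :
    cfc f A * cfc g A = cfc (fun x => f x * g x) A :=
  (cfc_mul f g A (finite_real_spectrum.continuousOn f) (finite_real_spectrum.continuousOn g)).symm

lemma PosSemidef.sqrt_eq_cfc {A : Matrix n n ℂ} (hA : A.PosSemidef) :
    hA.sqrt = cfc Real.sqrt A := by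
  rw [hA.1.cfc_eq]
  rfl

end Matrix

open Matrix

section

variable {n : Type*} [Fintype n] [DecidableEq n]

lemma msqrt_of_posSemidef {A : Matrix n n ℂ} (hA : A.PosSemidef) : msqrt A = CFC.sqrt A := by
  rw [msqrt, dif_pos hA, hA.sqrt_eq_cfc, CFC.sqrt_eq_real_sqrt A hA.nonneg, cfcₙ_eq_cfc]

lemma msqrt_mul_self {B : Matrix n n ℂ} (hB : B.PosSemidef) : msqrt (B * B) = B := by
  have hBB : (B * B).PosSemidef := by
    simpa only [hB.1.eq] using posSemidef_conjTranspose_mul_self B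
  rw [msqrt_of_posSemidef hBB, CFC.sqrt_mul_self B hB.nonneg]

lemma msqrt_mul_conjTranspose_msqrt {A : Matrix n n ℂ} (hA : A.PosSemidef) :
    msqrt A * (msqrt A)ᴴ = A := by
  rw [msqrt_of_posSemidef hA, (CFC.sqrt_nonneg A).posSemidef.1.eq,
    CFC.sqrt_mul_sqrt_self A hA.nonneg]

lemma traceNorm_eq_trace_cfc_sqrt (M : Matrix n n ℂ) :
    traceNorm M = (cfc Real.sqrt (Mᴴ * M)).trace.re := by
  rw [traceNorm, PosSemidef.sqrt_eq_cfc]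

lemma traceNorm_nonneg (M : Matrix n n ℂ) : 0 ≤ traceNorm M := by
  rw [traceNorm_eq_trace_cfc_sqrt]
  exact (Complex.nonneg_iff.1 (cfc_nonneg fun x _ => Real.sqrt_nonneg x).posSemidef.trace_nonneg).1

lemma exists_contraction_trace_mul_eq_traceNorm (M : Matrix n n ℂ) :
    ∃ V : Matrix n n ℂ, (1 - V * Vᴴ).PosSemidef ∧ (Vᴴ * M).trace.re = traceNorm M := by
  set A := Mᴴ * M
  -- `T` is the Moore–Penrose inverse of `√A` (using `0⁻¹ = 0`), so `V = M T` is a partial isometry.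
  set T := cfc (fun x : ℝ => (√x)⁻¹) A
  have hT : Tᴴ = T := (cfc_predicate (p := IsSelfAdjoint) _ A : IsSelfAdjoint T)
  have hTA : T * A = cfc Real.sqrt A := by
    conv_lhs => rw [← cfc_id' ℝ A (posSemidef_conjTranspose_mul_self M).1.isSelfAdjoint]
    rw [cfc_mul_cfc]
    exact cfc_congr fun x _ => by rw [inv_mul_eq_div, Real.div_sqrt]
  have hTAT : T * A * T * T = T := by
    rw [hTA, cfc_mul_cfc, cfc_mul_cfc]
    exact cfc_congr fun x _ => by rcases eq_or_ne (√x) 0 with h | h <;> simp [h]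
  refine ⟨M * T, ?_, ?_⟩
  · have hP : IsStarProjection (M * T * (M * T)ᴴ) :=
      { isIdempotentElem := by
          rw [IsIdempotentElem, conjTranspose_mul, hT]
          calc M * T * (T * Mᴴ) * (M * T * (T * Mᴴ)) = M * T * (T * A * T * T) * Mᴴ := by
                simp only [A, Matrix.mul_assoc]
            _ = M * T * (T * Mᴴ) := by rw [hTAT]; simp only [Matrix.mul_assoc]
        isSelfAdjoint := by
          simp only [IsSelfAdjoint, star_eq_conjTranspose, conjTranspose_mul,
            conjTranspose_conjTranspose, Matrix.mul_assoc] }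
    exact hP.one_sub_nonneg.posSemidef
  · rw [conjTranspose_mul, hT, Matrix.mul_assoc, hTA, traceNorm_eq_trace_cfc_sqrt]

lemma traceNorm_diagonal_mul_le (δ : n → ℂ) (Y : Matrix n n ℂ) :
    traceNorm (diagonal δ * Y) ≤ ∑ k, ‖δ k‖ * √((Y * Yᴴ) k k).re := by
  obtain ⟨V, hV, hVM⟩ := exists_contraction_trace_mul_eq_traceNorm (diagonal δ * Y)
  have hrow (k : n) : ‖(Y * Vᴴ) k k‖ ≤ √((Y * Yᴴ) k k).re := by
    have hVk : ((V * Vᴴ) k k).re ≤ 1 := by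
      simpa using (Complex.nonneg_iff.1 (hV.diag_nonneg (i := k))).1
    calc ‖(Y * Vᴴ) k k‖ ≤ √((Y * Yᴴ) k k).re * √((V * Vᴴ) k k).re :=
          norm_mul_conjTranspose_apply_le Y V k k
      _ ≤ √((Y * Yᴴ) k k).re :=
          mul_le_of_le_one_right (Real.sqrt_nonneg _) (Real.sqrt_le_one.2 hVk)
  calc traceNorm (diagonal δ * Y) = (∑ k, δ k * (Y * Vᴴ) k k).re := by
        rw [← hVM, trace_mul_comm, Matrix.mul_assoc, trace]
        simp [diagonal_mul]
    _ ≤ ∑ k, ‖δ k * (Y * Vᴴ) k k‖ := (Complex.re_le_norm _).trans (norm_sum_le _ _)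
    _ ≤ ∑ k, ‖δ k‖ * √((Y * Yᴴ) k k).re := by
        gcongr with k
        rw [norm_mul]
        exact mul_le_mul_of_nonneg_left (hrow k) (norm_nonneg _)

end

lemma maxClassCorr_eq_diagonal (d : ℕ) :
    maxClassCorr d = diagonal fun p : Fin d × Fin d => if p.1 = p.2 then (d : ℂ)⁻¹ else 0 := by
  ext ⟨i, j⟩ ⟨k, l⟩
  simp only [maxClassCorr, single_kronecker_single, Matrix.smul_apply, Matrix.sum_apply,
    single_apply, diagonal_apply, Prod.mk.injEq]
  by_cases hik : i = k ∧ j = l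
  · obtain ⟨rfl, rfl⟩ := hik
    by_cases hij : i = j
    · subst hij
      simp
    · simp [hij]
  · simp only [hik, if_false]
    refine smul_eq_zero_of_right _ (Finset.sum_eq_zero fun x _ => ?_)
    grind

lemma msqrt_maxClassCorr (d : ℕ) :
    msqrt (maxClassCorr d) =
      diagonal fun p : Fin d × Fin d => if p.1 = p.2 then (((√d)⁻¹ : ℝ) : ℂ) else 0 := by
  have hδ : (diagonal fun p : Fin d × Fin d =>
      if p.1 = p.2 then (((√d)⁻¹ : ℝ) : ℂ) else 0).PosSemidef := by
    refine PosSemidef.diagonal fun p => ?_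
    split_ifs <;> simp [Complex.zero_le_real]
  convert msqrt_mul_self hδ using 2
  have hd : (√(d : ℝ) : ℂ) ^ 2 = d := by
    norm_cast
    exact Real.sq_sqrt (Nat.cast_nonneg d)
  rw [maxClassCorr_eq_diagonal, diagonal_mul_diagonal]
  congr 1 with p
  split_ifs <;> simp [← hd, sq]

lemma traceNorm_msqrt_maxClassCorr_mul_le (d : ℕ) (Y : Matrix (Fin d × Fin d) (Fin d × Fin d) ℂ) :
    traceNorm (msqrt (maxClassCorr d) * Y) ≤ (√d)⁻¹ * ∑ m, √((Y * Yᴴ) (m, m) (m, m)).re := by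
  rw [msqrt_maxClassCorr]
  refine (traceNorm_diagonal_mul_le _ Y).trans_eq ?_
  rw [Fintype.sum_prod_type, Finset.mul_sum]
  refine Finset.sum_congr rfl fun i _ => ?_
  rw [Finset.sum_eq_single i (fun j _ hj => by simp [Ne.symm hj]) (by simp)]
  simp

theorem stmt18_general (d : ℕ)
    (σA σB : Matrix (Fin d) (Fin d) ℂ)
    (hA : σA.PosSemidef) (hB : σB.PosSemidef)
    (hAtr : σA.trace.re ≤ 1) (hBtr : σB.trace.re ≤ 1) :
    fid (maxClassCorr d) (σA ⊗ₖ σB) ≤ 1 / d := by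
  set Y := msqrt (σA ⊗ₖ σB)
  have hY (m : Fin d) : ((Y * Yᴴ) (m, m) (m, m)).re = (σA m m).re * (σB m m).re := by
    rw [msqrt_mul_conjTranspose_msqrt (hA.kronecker hB), kroneckerMap_apply,
      ← hA.1.coe_re_apply_self, ← hB.1.coe_re_apply_self]
    norm_cast
  have hdiag : ∑ m, √((Y * Yᴴ) (m, m) (m, m)).re ≤ 1 := by
    simp only [hY]
    exact (hA.sum_sqrt_re_diag_mul_le hB).trans <|
      mul_le_one₀ (Real.sqrt_le_one.2 hAtr) (Real.sqrt_nonneg _) (Real.sqrt_le_one.2 hBtr)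
  have hnorm : traceNorm (msqrt (maxClassCorr d) * Y) ≤ (√d)⁻¹ :=
    (traceNorm_msqrt_maxClassCorr_mul_le d Y).trans
      (mul_le_of_le_one_right (by positivity) hdiag)
  calc fid (maxClassCorr d) (σA ⊗ₖ σB) = traceNorm (msqrt (maxClassCorr d) * Y) ^ 2 := rfl
    _ ≤ ((√d)⁻¹) ^ 2 := pow_le_pow_left₀ (traceNorm_nonneg _) hnorm 2
    _ = 1 / d := by rw [inv_pow, Real.sq_sqrt (Nat.cast_nonneg d), one_div]

theorem stmt18 (d : ℕ) (hd : 1 ≤ d)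
    (σA σB : Matrix (Fin d) (Fin d) ℂ)
    (hA : σA.PosSemidef) (hB : σB.PosSemidef)
    (hAtr : σA.trace.re ≤ 1) (hBtr : σB.trace.re ≤ 1) :
    fid (maxClassCorr d) (σA ⊗ₖ σB) ≤ 1 / d :=
  stmt18_general d σA σB hA hB hAtr hBtr
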